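/- The formal power series g_b(x) = ∑_{n≥0} (∑_{k=0}^{n} C(n,k)^2 · C(2k,k)) x^n satisfies, as an identity of formal power series in z, g_b(z^2) = (1 + 3z)^{-1} · g_b(z·(1 − z)/(1 + 3z)). -/

import Mathlib

/-!
The coefficients `b n = ∑ₖ C(n,k)² C(2k,k)` satisfy the three-term recurrence
`(n+1)² b (n+1) = (10n² + 10n + 3) b n - 9n² b (n-1)`, proved by creative telescoping, so `g_b`
solves the second-order equation `(x(1-x)(1-9x) y')' = (3 - 9x) y`. A substitution `x = w(z)`
transforms an equation `(p y')' = q y` into `(P Y')' = (q ∘ w) w' Y` for `Y = y ∘ w` and any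
`P` with `P w' = p ∘ w`. Applied with `w = z²`, and with `w = z(1-z)/(1+3z)` followed by the
gauge factor `1/(1+3z)`, it shows that both sides of the identity solve
`(z(1-z²)(1-9z²) Y')' = 12z(1-3z²) Y`. At `z = 0` this equation has the double indicial root `0`,
so a power-series solution is determined by its constant term, which is `1` on both sides.
-/

open PowerSeries

/-- Formal composition `f ∘ g` of power series, valid when `g` has zero constant term:
the `n`-th coefficient is `∑_{k=0}^{n} f_k · [z^n] g^k`. -/
noncomputable def psComp (f g : PowerSeries ℚ) : PowerSeries ℚ :=
  PowerSeries.mk fun n =>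
    ∑ k ∈ Finset.range (n + 1), (PowerSeries.coeff (R := ℚ) k f) * PowerSeries.coeff (R := ℚ) n (g ^ k)

noncomputable def gb : PowerSeries ℚ :=
  PowerSeries.mk fun n =>
    ∑ k ∈ Finset.range (n + 1), (n.choose k : ℚ) ^ 2 * ((2 * k).choose k : ℚ)

@[simp]
theorem Derivation.map_ofNat {R A M : Type*} [CommSemiring R] [CommSemiring A] [AddCommMonoid M]
    [Algebra R A] [Module A M] [Module R M] (D : Derivation R A M) (n : ℕ) [n.AtLeastTwo] :
    D (ofNat(n) : A) = 0 := by
  rw [← Nat.cast_ofNat]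
  exact D.map_natCast n

theorem psComp_eq_subst {f g : ℚ⟦X⟧} (hg : constantCoeff g = 0) : psComp f g = f.subst g := by
  ext n
  rw [psComp, coeff_mk, coeff_subst' (HasSubst.of_constantCoeff_zero' hg),
    finsum_eq_sum_of_support_subset _ (s := Finset.range (n + 1))]
  · simp
  · intro k hk
    rw [Function.mem_support] at hk
    rw [Finset.coe_range, Set.mem_Iio, Nat.lt_succ_iff]
    by_contra! hnk
    refine hk ?_
    rw [coeff_of_lt_order n, smul_zero]
    calc (n : ℕ∞) < k := by exact_mod_cast hnk
      _ ≤ (g ^ k).order := le_order_pow_of_constantCoeff_eq_zero k hg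

section SecondOrder

variable {R : Type*} [CommRing R]

theorem derivative_mul_derivative_subst {p q y w P : R⟦X⟧} (hw : HasSubst w)
    (hy : d⁄dX R (p * d⁄dX R y) = q * y) (hP : P * d⁄dX R w = p.subst w) :
    d⁄dX R (P * d⁄dX R (y.subst w)) = q.subst w * d⁄dX R w * y.subst w := by
  calc d⁄dX R (P * d⁄dX R (y.subst w))
      = d⁄dX R ((p * d⁄dX R y).subst w) := by
        congr 1
        rw [derivative_subst hw, subst_mul hw, ← hP]
        ring
    _ = (q * y).subst w * d⁄dX R w := by rw [derivative_subst hw, hy]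
    _ = q.subst w * d⁄dX R w * y.subst w := by rw [subst_mul hw]; ring

theorem derivative_mul_derivative_gauge {P Q v F : R⟦X⟧}
    (h : d⁄dX R (P * d⁄dX R (v * F)) = Q * (v * F)) :
    d⁄dX R (P * v ^ 2 * d⁄dX R F)
      = (P * d⁄dX R v ^ 2 + v ^ 2 * Q - d⁄dX R (P * v * d⁄dX R v)) * F := by
  have hvF : d⁄dX R (v * F) = d⁄dX R v * F + v * d⁄dX R F := by
    rw [Derivation.leibniz, smul_eq_mul, smul_eq_mul]
    ring
  have hsplit : P * v ^ 2 * d⁄dX R F = v * (P * d⁄dX R (v * F)) - P * v * d⁄dX R v * F := by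
    rw [hvF]
    ring
  rw [hsplit, map_sub, Derivation.leibniz, Derivation.leibniz (d⁄dX R) (P * v * d⁄dX R v) F, h, hvF]
  simp only [smul_eq_mul]
  ring

end SecondOrder

theorem eq_zero_of_derivative_mul_derivative_eq_mul {K : Type*} [CommRing K] [IsDomain K]
    [CharZero K] {A B y : K⟦X⟧} (hA₀ : constantCoeff A = 0) (hA₁ : coeff 1 A ≠ 0)
    (hy₀ : constantCoeff y = 0) (h : d⁄dX K (A * d⁄dX K y) = B * y) : y = 0 := by
  by_contra hy
  have hlow : ∀ i < y.order.toNat, coeff i y = 0 := coeff_of_lt_order_toNat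
  obtain ⟨m, hm⟩ : ∃ m, y.order.toNat = m + 1 := by
    refine Nat.exists_eq_succ_of_ne_zero fun h0 => coeff_order hy ?_
    rwa [h0, coeff_zero_eq_constantCoeff]
  have hB : coeff m (B * y) = 0 := by
    refine coeff_mul_of_lt_order ?_
    rw [← ENat.natCast_toNat (order_eq_top.not.mpr hy), hm]
    exact_mod_cast m.lt_succ_self
  have hA : coeff m (d⁄dX K (A * d⁄dX K y))
      = coeff 1 A * (coeff (m + 1) y * (m + 1)) * (m + 1) := by
    rw [coeff_derivative, coeff_mul, Finset.sum_eq_single (1, m)]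
    · rw [coeff_derivative]
    · rintro ⟨i, j⟩ hij hne
      rw [Finset.HasAntidiagonal.mem_antidiagonal] at hij
      rcases i with _ | _ | i
      · rw [coeff_zero_eq_constantCoeff, hA₀, zero_mul]
      · have hj : j = m := by omega
        exact absurd (by rw [hj]) hne
      · rw [coeff_derivative, hlow _ (by omega), zero_mul, mul_zero]
    · intro h1m
      exact absurd (by simp [add_comm]) h1m
  have hm' : ((m : K) + 1) ≠ 0 := by exact_mod_cast m.succ_ne_zero
  rw [h, hB] at hA
  exact hA₁ (by simpa [hm', hlow, ← hm, coeff_order hy] using hA.symm)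

section Binomial

variable {K : Type*} [Field K] [CharZero K]

theorem Nat.cast_choose_eq_mul_choose_succ_div (n k : ℕ) :
    (n.choose k : K) = ((n : K) + 1 - k) * (n + 1).choose k / (n + 1) := by
  rw [eq_div_iff (Nat.cast_add_one_ne_zero n)]
  rcases le_or_gt k (n + 1) with hk | hk
  · have := congrArg (Nat.cast : ℕ → K) (Nat.choose_mul_succ_eq n k)
    push_cast [hk] at this
    linear_combination this
  · simp [Nat.choose_eq_zero_of_lt hk, Nat.choose_eq_zero_of_lt (n.lt_succ_self.trans hk)]

theorem Nat.cast_choose_succ_right (n k : ℕ) :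
    (n.choose (k + 1) : K) = ((n : K) - k) * n.choose k / (k + 1) := by
  rw [eq_div_iff (Nat.cast_add_one_ne_zero k)]
  rcases le_or_gt k n with hk | hk
  · have := congrArg (Nat.cast : ℕ → K) (Nat.choose_succ_right_eq n k)
    push_cast [hk] at this
    linear_combination this
  · simp [Nat.choose_eq_zero_of_lt hk, Nat.choose_eq_zero_of_lt (hk.trans k.lt_succ_self)]

theorem Nat.cast_choose_two_mul_succ (k : ℕ) :
    ((2 * (k + 1)).choose (k + 1) : K) = 2 * (2 * k + 1) * (2 * k).choose k / (k + 1) := by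
  rw [eq_div_iff (Nat.cast_add_one_ne_zero k), ← Nat.centralBinom_eq_two_mul_choose,
    ← Nat.centralBinom_eq_two_mul_choose]
  have := congrArg (Nat.cast : ℕ → K) (Nat.succ_mul_centralBinom_succ k)
  push_cast at this
  linear_combination this

end Binomial

def gbSummand (n k : ℕ) : ℚ := (n.choose k : ℚ) ^ 2 * ((2 * k).choose k : ℚ)

/-- Zeilberger's certificate for the recurrence satisfied by the coefficients of `gb`. -/
def gbCertificate (m k : ℕ) : ℚ :=
  (k : ℚ) ^ 3 * (3 * k - 4 * m - 8) * ((m + 2).choose k : ℚ) ^ 2 * ((2 * k).choose k : ℚ)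

theorem gbSummand_telescope (m k : ℕ) :
    ((m : ℚ) + 2) ^ 2 * (((m : ℚ) + 2) ^ 2 * gbSummand (m + 2) k
      - (10 * ((m : ℚ) + 1) ^ 2 + 10 * ((m : ℚ) + 1) + 3) * gbSummand (m + 1) k
      + 9 * ((m : ℚ) + 1) ^ 2 * gbSummand m k)
    = gbCertificate m (k + 1) - gbCertificate m k := by
  simp only [gbSummand, gbCertificate]
  rw [Nat.cast_choose_eq_mul_choose_succ_div m k, Nat.cast_choose_eq_mul_choose_succ_div (m + 1) k,
    Nat.cast_choose_succ_right (m + 2) k, Nat.cast_choose_two_mul_succ k]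
  push_cast
  field_simp
  ring

theorem coeff_gb_eq_sum {n N : ℕ} (h : n < N) :
    coeff n gb = ∑ k ∈ Finset.range N, gbSummand n k := by
  rw [gb, coeff_mk]
  refine Finset.sum_subset (Finset.range_subset_range.2 h) fun k _ hk => ?_
  rw [Finset.mem_range, not_lt] at hk
  simp [Nat.choose_eq_zero_of_lt hk]

theorem coeff_gb_recurrence (m : ℕ) :
    ((m : ℚ) + 2) ^ 2 * coeff (m + 2) gb
      = (10 * ((m : ℚ) + 1) ^ 2 + 10 * ((m : ℚ) + 1) + 3) * coeff (m + 1) gb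
        - 9 * ((m : ℚ) + 1) ^ 2 * coeff m gb := by
  have htel : ∑ k ∈ Finset.range (m + 3), (gbCertificate m (k + 1) - gbCertificate m k) = 0 := by
    rw [Finset.sum_range_sub]
    simp [gbCertificate]
  rw [← Finset.sum_congr rfl fun k _ => gbSummand_telescope m k, ← Finset.mul_sum,
    Finset.sum_add_distrib, Finset.sum_sub_distrib, ← Finset.mul_sum, ← Finset.mul_sum,
    ← Finset.mul_sum, ← coeff_gb_eq_sum (by omega), ← coeff_gb_eq_sum (by omega),
    ← coeff_gb_eq_sum (by omega)] at htel
  have hm : ((m : ℚ) + 2) ^ 2 ≠ 0 := by positivity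
  linear_combination (mul_eq_zero.mp htel).resolve_left hm

theorem constantCoeff_gb : constantCoeff gb = 1 := by simp [gb]

theorem coeff_gb_one : coeff 1 gb = 3 := by
  norm_num [gb, Finset.sum_range_succ]

theorem derivative_mul_derivative_gb :
    d⁄dX ℚ (X * (1 - X) * (1 - 9 * X) * d⁄dX ℚ gb) = (3 - 9 * X) * gb := by
  have hp : (X * (1 - X) * (1 - 9 * X) : ℚ⟦X⟧) = X ^ 1 - C 10 * X ^ 2 + C 9 * X ^ 3 := by
    rw [map_ofNat, map_ofNat]
    ring
  have hq : (3 - 9 * X : ℚ⟦X⟧) = C 3 - C 9 * X ^ 1 := by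
    rw [map_ofNat, map_ofNat]
    ring
  ext n
  rw [hp, hq]
  simp only [coeff_derivative, sub_mul, add_mul, mul_assoc, map_sub, map_add, coeff_C_mul,
    coeff_X_pow_mul']
  rcases n with _ | _ | m
  · simp [coeff_gb_one, constantCoeff_gb]
  · have := coeff_gb_recurrence 0
    norm_num [coeff_gb_one, constantCoeff_gb] at this ⊢
    linarith
  · have := coeff_gb_recurrence (m + 1)
    simp only [le_add_iff_nonneg_left, zero_le, ↓reduceIte, add_tsub_cancel_right,
      Nat.reduceSubDiff]
    push_cast at this ⊢
    linarith

theorem derivative_mul_derivative_gb_subst_X_sq :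
    d⁄dX ℚ (X * (1 - X ^ 2) * (1 - 9 * X ^ 2) * d⁄dX ℚ (gb.subst (X ^ 2 : ℚ⟦X⟧)))
      = 12 * X * (1 - 3 * X ^ 2) * gb.subst (X ^ 2 : ℚ⟦X⟧) := by
  have hX2 : HasSubst (X ^ 2 : ℚ⟦X⟧) := HasSubst.X_pow two_ne_zero
  have hsubst (f : ℚ⟦X⟧) : f.subst (X ^ 2 : ℚ⟦X⟧) = substAlgHom hX2 f := by rw [coe_substAlgHom]
  have hgb : d⁄dX ℚ (2 * (X * (1 - X) * (1 - 9 * X)) * d⁄dX ℚ gb) = 2 * (3 - 9 * X) * gb := by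
    rw [mul_assoc, two_mul, map_add, derivative_mul_derivative_gb]
    ring
  rw [derivative_mul_derivative_subst hX2 hgb] <;>
    simp only [hsubst, map_mul, map_sub, map_one, map_ofNat, substAlgHom_X, derivative_pow,
      derivative_X] <;>
    ring

theorem one_add_three_mul_X_mul_inv : (1 + 3 * X : ℚ⟦X⟧) * (1 + 3 * X)⁻¹ = 1 :=
  PowerSeries.mul_inv_cancel _ (by simp)

theorem derivative_X_mul_one_sub_X_mul_inv :
    d⁄dX ℚ (X * (1 - X) * (1 + 3 * X)⁻¹) = (1 + X) * (1 - 3 * X) * (1 + 3 * X : ℚ⟦X⟧)⁻¹ ^ 2 := by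
  have hdu : d⁄dX ℚ (1 + 3 * X : ℚ⟦X⟧)⁻¹ = -3 * (1 + 3 * X : ℚ⟦X⟧)⁻¹ ^ 2 := by
    simp only [derivative_inv', map_add, Derivation.map_one_eq_zero, Derivation.leibniz,
      Derivation.map_ofNat, derivative_X, smul_eq_mul]
    ring
  simp only [Derivation.leibniz, hdu, map_sub, derivative_X, Derivation.map_one_eq_zero,
    smul_eq_mul]
  linear_combination (-(1 - 2 * X) * (1 + 3 * X : ℚ⟦X⟧)⁻¹) * one_add_three_mul_X_mul_inv

theorem derivative_mul_derivative_gb_subst_X_mul_one_sub_X_mul_inv :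
    d⁄dX ℚ (X * (1 - X) * (1 + X) * (1 - 3 * X) * (1 + 3 * X)⁻¹
        * d⁄dX ℚ (gb.subst (X * (1 - X) * (1 + 3 * X)⁻¹ : ℚ⟦X⟧)))
      = 3 * (1 + 3 * X ^ 2) * (1 + X) * (1 - 3 * X) * (1 + 3 * X)⁻¹ ^ 3
        * gb.subst (X * (1 - X) * (1 + 3 * X)⁻¹ : ℚ⟦X⟧) := by
  have hdw := derivative_X_mul_one_sub_X_mul_inv
  set u : ℚ⟦X⟧ := (1 + 3 * X)⁻¹
  have hu : (1 + 3 * X) * u = 1 := one_add_three_mul_X_mul_inv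
  have hw : HasSubst (X * (1 - X) * u) := HasSubst.of_constantCoeff_zero' (by simp)
  have hsubst (f : ℚ⟦X⟧) : f.subst (X * (1 - X) * u) = substAlgHom hw f := by
    rw [coe_substAlgHom]
  -- for `w = X(1-X)u`: `1 - w = (1+X)² u` and `1 - 9w = (1-3X)² u`
  have hP : X * (1 - X) * (1 + X) * (1 - 3 * X) * u * d⁄dX ℚ (X * (1 - X) * u)
      = (X * (1 - X) * (1 - 9 * X) : ℚ⟦X⟧).subst (X * (1 - X) * u) := by
    simp only [hsubst, map_mul, map_sub, map_one, map_ofNat, substAlgHom_X, hdw]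
    linear_combination (X * (1 - X) * u
      * ((1 + X) ^ 2 * u + (1 - 3 * X) ^ 2 * u + 1 - (1 + 3 * X) * u)) * hu
  rw [derivative_mul_derivative_subst hw derivative_mul_derivative_gb hP]
  congr 1
  simp only [hsubst, map_mul, map_sub, map_ofNat, substAlgHom_X, hdw]
  linear_combination (-3 * (1 + X) * (1 - 3 * X) * u ^ 2) * hu

theorem derivative_mul_derivative_inv_mul_gb_subst :
    d⁄dX ℚ (X * (1 - X ^ 2) * (1 - 9 * X ^ 2)
        * d⁄dX ℚ ((1 + 3 * X)⁻¹ * gb.subst (X * (1 - X) * (1 + 3 * X)⁻¹ : ℚ⟦X⟧)))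
      = 12 * X * (1 - 3 * X ^ 2)
        * ((1 + 3 * X)⁻¹ * gb.subst (X * (1 - X) * (1 + 3 * X)⁻¹ : ℚ⟦X⟧)) := by
  have hH := derivative_mul_derivative_gb_subst_X_mul_one_sub_X_mul_inv
  set v : ℚ⟦X⟧ := 1 + 3 * X
  set u := v⁻¹
  have hu : v * u = 1 := one_add_three_mul_X_mul_inv
  have hdv : d⁄dX ℚ v = 3 := by simp [v]
  have hvu : v * (u * gb.subst (X * (1 - X) * u)) = gb.subst (X * (1 - X) * u) := by
    rw [← mul_assoc, hu, one_mul]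
  rw [← hvu] at hH
  have hF := derivative_mul_derivative_gauge hH
  have hA : X * (1 - X) * (1 + X) * (1 - 3 * X) * u * v ^ 2
      = X * (1 - X ^ 2) * (1 - 9 * X ^ 2) := by
    linear_combination (X * (1 - X) * (1 + X) * (1 - 3 * X) * v) * hu
  have hPv : X * (1 - X) * (1 + X) * (1 - 3 * X) * u * v * d⁄dX ℚ v
      = 3 * (X * (1 - X) * (1 + X) * (1 - 3 * X)) := by
    rw [hdv]
    linear_combination (3 * (X * (1 - X) * (1 + X) * (1 - 3 * X))) * hu
  rw [hA, hPv, hdv] at hF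
  rw [hF]
  congr 1
  simp only [Derivation.leibniz, map_sub, map_add, derivative_X, Derivation.map_one_eq_zero,
    Derivation.map_ofNat, smul_eq_mul]
  linear_combination (3 * (1 + X) * (1 - 3 * X) * (1 + (1 + 3 * X ^ 2) * u * (v * u + 1))) * hu

theorem functional_equation_gb :
    psComp gb (X ^ 2)
      = (1 + 3 * X : PowerSeries ℚ)⁻¹ * psComp gb (X * (1 - X) * (1 + 3 * X)⁻¹) := by
  have h₀ : constantCoeff
      (psComp gb (X ^ 2) - (1 + 3 * X : ℚ⟦X⟧)⁻¹ * psComp gb (X * (1 - X) * (1 + 3 * X)⁻¹)) = 0 := by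
    simp [psComp]
  rw [psComp_eq_subst (by simp), psComp_eq_subst (by simp)] at h₀ ⊢
  refine sub_eq_zero.mp (eq_zero_of_derivative_mul_derivative_eq_mul
    (A := X * (1 - X ^ 2) * (1 - 9 * X ^ 2)) (B := 12 * X * (1 - 3 * X ^ 2))
    (by simp) (by rw [mul_assoc, coeff_succ_X_mul]; simp) h₀ ?_)
  rw [map_sub, mul_sub, map_sub, derivative_mul_derivative_gb_subst_X_sq,
    derivative_mul_derivative_inv_mul_gb_subst]
  ring
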